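/- Define rational numbers C_p by C_0 = 1 and Σ_{q=0}^p C_{p−q}/(2q+1)! = 0 for p ≥ 1. Then for all p ≥ 0, Σ_{q=0}^p 2^{2p−2q}·C_{p−q}/(2q)! = C_p. -/

import Mathlib

/-!
Write `S(x) = ∑ x^q / (2q+1)! = sinh √x / √x`. The recursion says exactly that `∑ C_p x^p`
is `1 / S`, and the claim is the coefficient of `x^p` in `cosh √x / S(4x) = 1 / S(x)`.
This is the doubling formula `cosh y · sinh y = sinh (2y) / 2`, i.e. `cosh √x · S(x) = S(4x)`.
-/

open Finset PowerSeries Nat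

theorem Finset.sum_range_two_mul {M : Type*} [AddCommMonoid M] (f : ℕ → M) (n : ℕ) :
    ∑ i ∈ range (2 * n), f i = ∑ i ∈ range n, (f (2 * i) + f (2 * i + 1)) := by
  induction n with
  | zero => simp
  | succ n ih => rw [Nat.mul_succ, sum_range_succ, sum_range_succ, sum_range_succ, ih, add_assoc]

theorem Nat.sum_range_choose_odd (n : ℕ) :
    ∑ k ∈ range (n + 1), (2 * n + 1).choose (2 * k + 1) = 4 ^ n := by
  simp_rw [Nat.choose_succ_succ']
  rw [← sum_range_two_mul, Nat.mul_succ, sum_range_succ, choose_succ_self, add_zero,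
    sum_range_choose, pow_mul]
  rfl

theorem PowerSeries.coeff_mul_eq_sum_range {R : Type*} [Semiring R] (f g : R⟦X⟧) (n : ℕ) :
    coeff n (f * g) = ∑ k ∈ range (n + 1), coeff k f * coeff (n - k) g := by
  rw [coeff_mul, Nat.sum_antidiagonal_eq_sum_range_succ (fun i j => coeff i f * coeff j g)]

section

variable (K : Type*) [Field K]

-- `cosh √x`
noncomputable def coshSqrtSeries : K⟦X⟧ := mk fun q => 1 / ((2 * q) ! : K)

-- `sinh √x / √x`
noncomputable def sinhSqrtDivSqrtSeries : K⟦X⟧ := mk fun q => 1 / ((2 * q + 1) ! : K)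

theorem constantCoeff_sinhSqrtDivSqrtSeries : constantCoeff (sinhSqrtDivSqrtSeries K) = 1 := by
  simp [sinhSqrtDivSqrtSeries, ← coeff_zero_eq_constantCoeff_apply]

theorem sinhSqrtDivSqrtSeries_ne_zero : sinhSqrtDivSqrtSeries K ≠ 0 := fun h => by
  simpa [h] using constantCoeff_sinhSqrtDivSqrtSeries K

-- On coefficients: `∑ₖ (2n+1).choose (2k+1) = 4^n`.
theorem coshSqrtSeries_mul_sinhSqrtDivSqrtSeries [CharZero K] :
    coshSqrtSeries K * sinhSqrtDivSqrtSeries K = rescale 4 (sinhSqrtDivSqrtSeries K) := by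
  ext n
  have hterm : ∀ x ∈ antidiagonal n, 1 / ((2 * x.1) ! : K) * (1 / (2 * x.2 + 1) !) =
      (2 * n + 1).choose (2 * x.2 + 1) / (2 * n + 1) ! := by
    rintro ⟨i, j⟩ hij
    obtain rfl : i + j = n := mem_antidiagonal.mp hij
    rw [show 2 * (i + j) + 1 = 2 * i + (2 * j + 1) by ring, ← choose_symm_add, cast_add_choose]
    have := (2 * i + (2 * j + 1)).factorial_ne_zero
    field_simp
  rw [coeff_mul, coeff_rescale]
  simp only [coshSqrtSeries, sinhSqrtDivSqrtSeries, coeff_mk]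
  rw [sum_congr rfl hterm, ← sum_div, ← Nat.sum_antidiagonal_swap]
  simp only [Prod.snd_swap]
  rw [Nat.sum_antidiagonal_eq_sum_range_succ (fun i _ => ((2 * n + 1).choose (2 * i + 1) : K)),
    ← cast_sum, sum_range_choose_odd]
  push_cast
  ring

theorem mk_mul_sinhSqrtDivSqrtSeries_eq_one {c : ℕ → K} (hc0 : c 0 = 1)
    (hc : ∀ p, 1 ≤ p → ∑ q ∈ range (p + 1), c (p - q) / ((2 * q + 1) ! : K) = 0) :
    sinhSqrtDivSqrtSeries K * mk c = 1 := by
  ext p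
  rw [coeff_mul_eq_sum_range, coeff_one]
  simp only [sinhSqrtDivSqrtSeries, coeff_mk]
  rcases Nat.eq_zero_or_pos p with rfl | hp
  · simp [hc0]
  · rw [if_neg hp.ne', ← hc p hp]
    exact sum_congr rfl fun q _ => one_div_mul_eq_div _ _

end

theorem C_recursion_d (C : ℕ → ℚ) (hC0 : C 0 = 1)
    (hCrec : ∀ p : ℕ, 1 ≤ p → ∑ q ∈ Finset.range (p + 1), C (p - q) / (Nat.factorial (2 * q + 1) : ℚ) = 0) (p : ℕ) :
    ∑ q ∈ Finset.range (p + 1), 2 ^ (2 * p - 2 * q) * C (p - q) / (Nat.factorial (2 * q) : ℚ) =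
      C p := by
  have hinv := mk_mul_sinhSqrtDivSqrtSeries_eq_one ℚ hC0 hCrec
  have hscaled : coshSqrtSeries ℚ * rescale 4 (mk C) = mk C := by
    refine mul_right_cancel₀ (sinhSqrtDivSqrtSeries_ne_zero ℚ) ?_
    calc coshSqrtSeries ℚ * rescale 4 (mk C) * sinhSqrtDivSqrtSeries ℚ
        = coshSqrtSeries ℚ * sinhSqrtDivSqrtSeries ℚ * rescale 4 (mk C) := by ring
      _ = rescale 4 (sinhSqrtDivSqrtSeries ℚ * mk C) := by
        rw [coshSqrtSeries_mul_sinhSqrtDivSqrtSeries, map_mul]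
      _ = mk C * sinhSqrtDivSqrtSeries ℚ := by rw [hinv, map_one, mul_comm, hinv]
  have hcoeff := congrArg (coeff p) hscaled
  rw [coeff_mul_eq_sum_range] at hcoeff
  simp only [coshSqrtSeries, coeff_rescale, coeff_mk] at hcoeff
  rw [← hcoeff]
  refine sum_congr rfl fun q _ => ?_
  rw [show 2 * p - 2 * q = 2 * (p - q) by omega, pow_mul]
  ring
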